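/- Let $Z_0, Z_1, \dots, Z_T$ be an integrable adapted payoff process on a filtered probability space, and define stopping times backwards by $\tau_T = T$ and $\tau_t = t\,\mathbf 1\{Z_t \ge E[Z_{\tau_{t+1}} \mid \mathcal F_t]\} + \tau_{t+1}\,\mathbf 1\{Z_t < E[Z_{\tau_{t+1}} \mid \mathcal F_t]\}$. Then each $\tau_t$ is a stopping time with values in $\{t,\dots,T\}$, and $E[Z_{\tau_t}] = \sup_{\tau \in \mathcal T_{t,T}} E[Z_\tau]$, where $\mathcal T_{t,T}$ is the set of stopping times with values in $\{t,\dots,T\}$; in particular $E[Z_{\tau_0}]$ is the optimal-stopping value $\sup_{\tau \in \mathcal T_{0,T}} E[Z_\tau]$. -/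

import Mathlib

/-!
Backward induction proves more than the claim: `τ_t` is optimal in `𝒯_{t,T}` conditionally on
`ℱ_t`, i.e. `E[Z_σ | ℱ_t] ≤ E[Z_{τ_t} | ℱ_t]` a.s. for every `σ ∈ 𝒯_{t,T}`; taking expectations
gives the theorem. For the step, `E[Z_{τ_t} | ℱ_t] = max (Z_t, E[Z_{τ_{t+1}} | ℱ_t])`, while any
`σ ∈ 𝒯_{t,T}` is the `ℱ_t`-measurable choice between stopping at `t` and `σ ∨ (t + 1) ∈ 𝒯_{t+1,T}`,
whose conditional value given `ℱ_t` is at most `E[Z_{τ_{t+1}} | ℱ_t]` by the tower property and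
the induction hypothesis at `t + 1`.
-/

open MeasureTheory ProbabilityTheory Filter

section CondExp

variable {Ω E : Type*} [NormedAddCommGroup E] [NormedSpace ℝ E] [CompleteSpace E]
  {m m0 : MeasurableSpace Ω} {μ : Measure Ω}

theorem condExp_piecewise_of_stronglyMeasurable (hm : m ≤ m0) [SigmaFinite (μ.trim hm)]
    {s : Set Ω} [DecidablePred (· ∈ s)] (hs : MeasurableSet[m] s) {f g : Ω → E}
    (hf : StronglyMeasurable[m] f) (hfi : Integrable f μ) (hgi : Integrable g μ) :
    μ[s.piecewise f g | m] =ᵐ[μ] s.piecewise f (μ[g | m]) := by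
  have hfs : Integrable (s.indicator f) μ := hfi.indicator (hm s hs)
  have hgs : Integrable (sᶜ.indicator g) μ := hgi.indicator (hm sᶜ hs.compl)
  simp only [← Set.indicator_add_compl_eq_piecewise]
  filter_upwards [condExp_add hfs hgs m, condExp_indicator hgi hs.compl] with ω hadd hind
  rw [hadd, Pi.add_apply, Pi.add_apply, hind,
    condExp_of_stronglyMeasurable hm (hf.indicator hs) hfs]

theorem condExp_mono_of_condExp_le {m₁ m₂ : MeasurableSpace Ω} (hm₁₂ : m₁ ≤ m₂) (hm₂ : m₂ ≤ m0)
    [SigmaFinite (μ.trim hm₂)] {f g : Ω → ℝ} (hfg : μ[f | m₂] ≤ᵐ[μ] μ[g | m₂]) :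
    μ[f | m₁] ≤ᵐ[μ] μ[g | m₁] :=
  calc μ[f | m₁] =ᵐ[μ] μ[μ[f | m₂] | m₁] := (condExp_condExp_of_le hm₁₂ hm₂).symm
    _ ≤ᵐ[μ] μ[μ[g | m₂] | m₁] := condExp_mono integrable_condExp integrable_condExp hfg
    _ =ᵐ[μ] μ[g | m₁] := condExp_condExp_of_le hm₁₂ hm₂

theorem integral_le_integral_of_condExp_le (hm : m ≤ m0) [SigmaFinite (μ.trim hm)]
    {f g : Ω → ℝ} (hfg : μ[f | m] ≤ᵐ[μ] μ[g | m]) : ∫ ω, f ω ∂μ ≤ ∫ ω, g ω ∂μ := by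
  rw [← integral_condExp hm, ← integral_condExp hm (f := g)]
  exact integral_mono_ae integrable_condExp integrable_condExp hfg

end CondExp

section StoppingTime

variable {Ω E : Type*} [NormedAddCommGroup E] [NormedSpace ℝ E] [CompleteSpace E]
  {m0 : MeasurableSpace Ω} {μ : Measure Ω} {ℱ : Filtration ℕ m0} {t T : ℕ} {σ τ : Ω → ℕ}

/-- The class `𝒯_{t,T}`. -/
def stoppingTimesIcc (ℱ : Filtration ℕ m0) (t T : ℕ) : Set (Ω → ℕ) :=
  {σ | IsStoppingTime ℱ (fun ω => (σ ω : WithTop ℕ)) ∧ ∀ ω, t ≤ σ ω ∧ σ ω ≤ T}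

theorem mem_stoppingTimesIcc_self_iff : σ ∈ stoppingTimesIcc ℱ T T ↔ σ = fun _ => T := by
  refine ⟨fun hσ => funext fun ω => le_antisymm (hσ.2 ω).2 (hσ.2 ω).1, ?_⟩
  rintro rfl
  exact ⟨isStoppingTime_const ℱ T, fun _ => ⟨le_rfl, le_rfl⟩⟩

theorem stoppingTimesIcc_succ_subset : stoppingTimesIcc ℱ (t + 1) T ⊆ stoppingTimesIcc ℱ t T :=
  fun _ hσ => ⟨hσ.1, fun ω => ⟨t.le_succ.trans (hσ.2 ω).1, (hσ.2 ω).2⟩⟩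

omit [NormedSpace ℝ E] [CompleteSpace E] in
theorem integrable_comp_of_mem_stoppingTimesIcc {Z : ℕ → Ω → E} (hZ : ∀ n, Integrable (Z n) μ)
    (hσ : σ ∈ stoppingTimesIcc ℱ t T) : Integrable (fun ω => Z (σ ω) ω) μ :=
  integrable_stoppedValue ℕ hσ.1 hZ (N := T) fun ω => WithTop.coe_le_coe.mpr (hσ.2 ω).2

theorem piecewise_const_mem_stoppingTimesIcc {s : Set Ω} [DecidablePred (· ∈ s)]
    (hs : MeasurableSet[ℱ t] s) (hσ : σ ∈ stoppingTimesIcc ℱ t T) :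
    s.piecewise (fun _ => t) σ ∈ stoppingTimesIcc ℱ t T := by
  have hcoe : (fun ω => ((s.piecewise (fun _ => t) σ ω : ℕ) : WithTop ℕ))
      = s.piecewise (fun _ => (t : WithTop ℕ)) fun ω => (σ ω : WithTop ℕ) :=
    funext fun ω => by by_cases h : ω ∈ s <;> simp [h]
  refine ⟨?_, fun ω => ?_⟩
  · rw [hcoe]
    exact (isStoppingTime_const ℱ _).piecewise_of_le hσ.1 (fun _ => le_rfl)
      (fun ω => WithTop.coe_le_coe.mpr (hσ.2 ω).1) hs
  · by_cases h : ω ∈ s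
    · simpa [h] using (hσ.2 ω).1.trans (hσ.2 ω).2
    · simpa [h] using hσ.2 ω

theorem max_succ_mem_stoppingTimesIcc (ht : t < T) (hσ : σ ∈ stoppingTimesIcc ℱ t T) :
    (fun ω => max (σ ω) (t + 1)) ∈ stoppingTimesIcc ℱ (t + 1) T := by
  refine ⟨?_, fun ω => ⟨le_max_right _ _, max_le (hσ.2 ω).2 ht⟩⟩
  rw [show (fun ω => ((max (σ ω) (t + 1) : ℕ) : WithTop ℕ))
      = fun ω => max (σ ω : WithTop ℕ) ((t + 1 : ℕ) : WithTop ℕ) from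
    funext fun ω => WithTop.coe_max _ _]
  exact hσ.1.max_const (t + 1)

theorem eq_piecewise_max_succ (hσ : ∀ ω, t ≤ σ ω) :
    σ = {ω | σ ω = t}.piecewise (fun _ => t) fun ω => max (σ ω) (t + 1) := by
  funext ω
  by_cases h : σ ω = t
  · simp [h]
  · have := hσ ω
    simp only [Set.piecewise, Set.mem_ofPred_eq, h, if_false]
    omega

theorem condExp_comp_piecewise_const [SigmaFiniteFiltration μ ℱ] {Z : ℕ → Ω → E}
    (hZt : StronglyMeasurable[ℱ t] (Z t)) (hZti : Integrable (Z t) μ)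
    (hσ : Integrable (fun ω => Z (σ ω) ω) μ) {s : Set Ω} [DecidablePred (· ∈ s)]
    (hs : MeasurableSet[ℱ t] s) :
    μ[fun ω => Z (s.piecewise (fun _ => t) σ ω) ω | ℱ t]
      =ᵐ[μ] s.piecewise (Z t) (μ[fun ω => Z (σ ω) ω | ℱ t]) := by
  have hcomp : (fun ω => Z (s.piecewise (fun _ => t) σ ω) ω)
      = s.piecewise (Z t) fun ω => Z (σ ω) ω :=
    funext fun ω => by by_cases h : ω ∈ s <;> simp [h]
  rw [hcomp]
  exact condExp_piecewise_of_stronglyMeasurable (ℱ.le t) hs hZt hZti hσ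

end StoppingTime

section OptimalStopping

variable {Ω : Type*} {m0 : MeasurableSpace Ω} {μ : Measure Ω} {ℱ : Filtration ℕ m0}
  [SigmaFiniteFiltration μ ℱ] {Z : ℕ → Ω → ℝ} {t T : ℕ} {τ : Ω → ℕ}

def IsCondOptimalStoppingTime (μ : Measure Ω) (ℱ : Filtration ℕ m0) (Z : ℕ → Ω → ℝ) (t T : ℕ)
    (τ : Ω → ℕ) : Prop :=
  τ ∈ stoppingTimesIcc ℱ t T ∧ ∀ σ ∈ stoppingTimesIcc ℱ t T,
    μ[fun ω => Z (σ ω) ω | ℱ t] ≤ᵐ[μ] μ[fun ω => Z (τ ω) ω | ℱ t]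

omit [SigmaFiniteFiltration μ ℱ] in
theorem isCondOptimalStoppingTime_const_self :
    IsCondOptimalStoppingTime μ ℱ Z T T fun _ => T :=
  ⟨mem_stoppingTimesIcc_self_iff.mpr rfl, fun σ hσ => by
    rw [mem_stoppingTimesIcc_self_iff.mp hσ]⟩

noncomputable def stopOrContinue (μ : Measure Ω) (ℱ : Filtration ℕ m0) (Z : ℕ → Ω → ℝ) (t : ℕ)
    (τ : Ω → ℕ) : Ω → ℕ :=
  {ω | μ[fun ω' => Z (τ ω') ω' | ℱ t] ω ≤ Z t ω}.piecewise (fun _ => t) τ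

omit [SigmaFiniteFiltration μ ℱ] in
theorem measurableSet_condExp_le_of_adapted (hZ : Adapted ℱ Z) :
    MeasurableSet[ℱ t] {ω | μ[fun ω' => Z (τ ω') ω' | ℱ t] ω ≤ Z t ω} :=
  measurableSet_le stronglyMeasurable_condExp.measurable (hZ t)

omit [SigmaFiniteFiltration μ ℱ] in
theorem stopOrContinue_mem_stoppingTimesIcc (hZ : Adapted ℱ Z)
    (hτ : τ ∈ stoppingTimesIcc ℱ t T) : stopOrContinue μ ℱ Z t τ ∈ stoppingTimesIcc ℱ t T :=
  piecewise_const_mem_stoppingTimesIcc (measurableSet_condExp_le_of_adapted (μ := μ) hZ) hτ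

theorem condExp_comp_stopOrContinue (hZ : Adapted ℱ Z) (hZi : ∀ n, Integrable (Z n) μ)
    (hτ : τ ∈ stoppingTimesIcc ℱ t T) :
    μ[fun ω => Z (stopOrContinue μ ℱ Z t τ ω) ω | ℱ t]
      =ᵐ[μ] fun ω => max (Z t ω) (μ[fun ω' => Z (τ ω') ω' | ℱ t] ω) := by
  unfold stopOrContinue
  filter_upwards [condExp_comp_piecewise_const (hZ t).stronglyMeasurable (hZi t)
    (integrable_comp_of_mem_stoppingTimesIcc hZi hτ)
    (measurableSet_condExp_le_of_adapted (μ := μ) hZ)] with ω hω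
  rw [hω]
  by_cases h : μ[fun ω' => Z (τ ω') ω' | ℱ t] ω ≤ Z t ω
  · simp [Set.piecewise, h]
  · simp [Set.piecewise, h, (not_le.mp h).le]

theorem IsCondOptimalStoppingTime.stopOrContinue_of_succ (hZ : Adapted ℱ Z)
    (hZi : ∀ n, Integrable (Z n) μ) (ht : t < T)
    (hτ : IsCondOptimalStoppingTime μ ℱ Z (t + 1) T τ) :
    IsCondOptimalStoppingTime μ ℱ Z t T (stopOrContinue μ ℱ Z t τ) := by
  have hτt : τ ∈ stoppingTimesIcc ℱ t T := stoppingTimesIcc_succ_subset hτ.1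
  refine ⟨stopOrContinue_mem_stoppingTimesIcc hZ hτt, fun σ hσ => ?_⟩
  set σ' : Ω → ℕ := fun ω => max (σ ω) (t + 1)
  have hσ' : σ' ∈ stoppingTimesIcc ℱ (t + 1) T := max_succ_mem_stoppingTimesIcc ht hσ
  have hσ_eq : σ = {ω | σ ω = t}.piecewise (fun _ => t) σ' :=
    eq_piecewise_max_succ fun ω => (hσ.2 ω).1
  have hstop : MeasurableSet[ℱ t] {ω | σ ω = t} := by
    simpa only [ENat.some_eq_natCast, Nat.cast_inj] using hσ.1.measurableSet_eq t
  have hcont : μ[fun ω => Z (σ' ω) ω | ℱ t] ≤ᵐ[μ] μ[fun ω => Z (τ ω) ω | ℱ t] :=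
    condExp_mono_of_condExp_le (ℱ.mono t.le_succ) (ℱ.le (t + 1)) (hτ.2 σ' hσ')
  calc μ[fun ω => Z (σ ω) ω | ℱ t]
      =ᵐ[μ] {ω | σ ω = t}.piecewise (Z t) (μ[fun ω => Z (σ' ω) ω | ℱ t]) := by
        conv_lhs => rw [hσ_eq]
        exact condExp_comp_piecewise_const (hZ t).stronglyMeasurable (hZi t)
          (integrable_comp_of_mem_stoppingTimesIcc hZi hσ') hstop
    _ ≤ᵐ[μ] fun ω => max (Z t ω) (μ[fun ω' => Z (τ ω') ω' | ℱ t] ω) := by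
        filter_upwards [hcont] with ω hω
        by_cases h : σ ω = t
        · simp [Set.piecewise, h]
        · simpa [Set.piecewise, h] using Or.inr hω
    _ =ᵐ[μ] μ[fun ω => Z (stopOrContinue μ ℱ Z t τ ω) ω | ℱ t] :=
        (condExp_comp_stopOrContinue hZ hZi hτt).symm

end OptimalStopping

/-- Discrete-time optimal stopping by backward induction (Snell envelope): for
an integrable adapted payoff `Z_0, …, Z_T` and the stopping times defined backwards by `τ_T = T`
and `τ_t = t` on `{Z_t ≥ E[Z_{τ_{t+1}} | ℱ_t]}`, `τ_t = τ_{t+1}` otherwise, each `τ_t` is a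
stopping time with values in `{t, …, T}` and `E[Z_{τ_t}] = sup_{σ ∈ 𝒯_{t,T}} E[Z_σ]`; in
particular `E[Z_{τ_0}]` is the optimal-stopping value. -/
theorem snell_envelope_optimal_stopping
    {Ω : Type*} {m0 : MeasurableSpace Ω} (μ : Measure Ω) [IsProbabilityMeasure μ]
    (ℱ : Filtration ℕ m0) (T : ℕ)
    (Z : ℕ → Ω → ℝ) (hZadapted : Adapted ℱ Z)
    (hZint : ∀ t, Integrable (Z t) μ)
    (τ : ℕ → Ω → ℕ)
    (hτT : ∀ ω, τ T ω = T)
    (hτrec : ∀ t, t < T → ∀ ω,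
      τ t ω = if (μ[fun ω' => Z (τ (t + 1) ω') ω' | ℱ t]) ω ≤ Z t ω
        then t else τ (t + 1) ω) :
    ∀ t, t ≤ T →
      IsStoppingTime ℱ (fun ω => ((τ t ω : ℕ) : WithTop ℕ)) ∧ (∀ ω, t ≤ τ t ω ∧ τ t ω ≤ T) ∧
      IsGreatest
        {x : ℝ | ∃ σ : Ω → ℕ, IsStoppingTime ℱ (fun ω => ((σ ω : ℕ) : WithTop ℕ)) ∧ (∀ ω, t ≤ σ ω ∧ σ ω ≤ T) ∧
          x = ∫ ω, Z (σ ω) ω ∂μ}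
        (∫ ω, Z (τ t ω) ω ∂μ) := by
  have hopt : ∀ t ≤ T, IsCondOptimalStoppingTime μ ℱ Z t T (τ t) := by
    refine fun t ht => Nat.decreasingInduction (fun k hk ih => ?_) ?_ ht
    · rw [show τ k = stopOrContinue μ ℱ Z k (τ (k + 1)) from funext (hτrec k hk)]
      exact ih.stopOrContinue_of_succ hZadapted hZint hk
    · rw [funext hτT]
      exact isCondOptimalStoppingTime_const_self
  intro t ht
  obtain ⟨⟨hτt, hτt_bdd⟩, hτt_opt⟩ := hopt t ht
  refine ⟨hτt, hτt_bdd, ⟨τ t, hτt, hτt_bdd, rfl⟩, ?_⟩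
  rintro _ ⟨σ, hσ, hσ_bdd, rfl⟩
  exact integral_le_integral_of_condExp_le (ℱ.le t) (hτt_opt σ ⟨hσ, hσ_bdd⟩)
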